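/- Let Δ ⊆ ℝ_{≥0}^n be a Newton polyhedron with a loose edge E with endpoints a = (a_1,…,a_n) and b = (b_1,…,b_n). If min(a_i, b_i) = 0 for every i = 1,…,n, then a and b are the only vertices of Δ. -/

import Mathlib

open Finset

def dotp {n : ℕ} (ξ a : Fin n → ℝ) : ℝ := ∑ i, ξ i * a i

def IsNewtonPolyhedron {n : ℕ} (Δ : Set (Fin n → ℝ)) : Prop :=
  ∃ S : Finset (Fin n → ℝ), S.Nonempty ∧ (∀ a ∈ S, ∀ i, ∃ m : ℕ, a i = (m : ℝ)) ∧
    Δ = {x | ∃ y ∈ convexHull ℝ (S : Set (Fin n → ℝ)),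
          ∃ z : Fin n → ℝ, (∀ i, 0 ≤ z i) ∧ x = y + z}

def NPface {n : ℕ} (Δ : Set (Fin n → ℝ)) (ξ : Fin n → ℝ) : Set (Fin n → ℝ) :=
  {a ∈ Δ | ∀ b ∈ Δ, dotp ξ a ≤ dotp ξ b}

def IsFaceOf {n : ℕ} (Δ A : Set (Fin n → ℝ)) : Prop :=
  ∃ ξ : Fin n → ℝ, (∀ i, 0 ≤ ξ i) ∧ A = NPface Δ ξ

noncomputable def npDim {n : ℕ} (A : Set (Fin n → ℝ)) : ℕ :=
  Module.finrank ℝ (vectorSpan ℝ A)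

def IsLooseEdge {n : ℕ} (Δ E : Set (Fin n → ℝ)) : Prop :=
  IsFaceOf Δ E ∧ IsCompact E ∧ npDim E = 1 ∧
    ∀ F, IsFaceOf Δ F → IsCompact F → 2 ≤ npDim F → ¬ E ⊆ F

/-- `v` is a vertex (0-dimensional face) of `Δ`. -/
def IsVertexOf {n : ℕ} (Δ : Set (Fin n → ℝ)) (v : Fin n → ℝ) : Prop :=
  ∃ ξ : Fin n → ℝ, (∀ i, 0 ≤ ξ i) ∧ NPface Δ ξ = {v}

/-! Suppose `v` is a third vertex, cut out by `η`. As `a` and `b` have disjoint supports, `η` can be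
rescaled separately on the two supports so that it equals `1` at `a` and `b` but is `< 1` at `v`.
The edge is cut out by a strictly positive `ξ` (a face with a zero weight is unbounded); tilting
`ξ` towards the rescaled `η` keeps `[a, b]` in the minimal face until a point of `S` with `η < 1`,
hence off the line `ab`, joins it. That face is compact and at least two-dimensional, so the edge
is not loose. -/

section

variable {n : ℕ}

lemma dotp_eq_dotProduct (ξ x : Fin n → ℝ) : dotp ξ x = ξ ⬝ᵥ x := rfl

lemma dotp_nonneg {ξ x : Fin n → ℝ} (hξ : ∀ i, 0 ≤ ξ i) (hx : ∀ i, 0 ≤ x i) : 0 ≤ dotp ξ x :=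
  Finset.sum_nonneg fun i _ => mul_nonneg (hξ i) (hx i)

lemma eq_zero_of_dotp_nonpos {ζ z : Fin n → ℝ} (hζ : ∀ i, 0 < ζ i) (hz : ∀ i, 0 ≤ z i)
    (h : dotp ζ z ≤ 0) : z = 0 := by
  have hterms := (Finset.sum_eq_zero_iff_of_nonneg fun i _ => mul_nonneg (hζ i).le (hz i)).1
    (h.antisymm (dotp_nonneg (fun i => (hζ i).le) hz))
  funext i
  exact (mul_eq_zero.1 (hterms i (Finset.mem_univ i))).resolve_left (hζ i).ne'

section NPface

variable {Δ : Set (Fin n → ℝ)}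

lemma dotp_lt_of_NPface_eq_singleton {η v x : Fin n → ℝ} (hv : NPface Δ η = {v}) (hx : x ∈ Δ)
    (hxv : x ≠ v) : dotp η v < dotp η x := by
  have hvΔ : v ∈ NPface Δ η := hv.ge rfl
  refine (hvΔ.2 x hx).lt_of_ne fun heq => hxv ?_
  have hxΔ : x ∈ NPface Δ η := ⟨hx, fun y hy => heq ▸ hvΔ.2 y hy⟩
  rwa [hv] at hxΔ

lemma segment_subset_NPface {ζ a b : Fin n → ℝ} (hΔ : segment ℝ a b ⊆ Δ) (ha : a ∈ NPface Δ ζ)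
    (hb : b ∈ NPface Δ ζ) : segment ℝ a b ⊆ NPface Δ ζ := by
  rintro _ ⟨u, w, hu, hw, huw, rfl⟩
  refine ⟨hΔ ⟨u, w, hu, hw, huw, rfl⟩, fun y hy => ?_⟩
  have hcombo : dotp ζ (u • a + w • b) = u * dotp ζ a + w * dotp ζ b := by
    simp only [dotp_eq_dotProduct, dotProduct_add, dotProduct_smul, smul_eq_mul]
  rw [hcombo]
  calc u * dotp ζ a + w * dotp ζ b ≤ u * dotp ζ y + w * dotp ζ y :=
        add_le_add (mul_le_mul_of_nonneg_left (ha.2 y hy) hu)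
          (mul_le_mul_of_nonneg_left (hb.2 y hy) hw)
    _ = dotp ζ y := by rw [← add_mul, huw, one_mul]

lemma mem_NPface_of_dotp_eq {ζ a x : Fin n → ℝ} (ha : a ∈ NPface Δ ζ)
    (hx : x ∈ Δ) (h : dotp ζ x = dotp ζ a) : x ∈ NPface Δ ζ :=
  ⟨hx, fun y hy => h.trans_le (ha.2 y hy)⟩

/-- A zero weight `ξ j = 0` would put the whole ray `x + t eⱼ` into the face. -/
lemma pos_of_NPface_subset_segment
    (hup : ∀ x ∈ Δ, ∀ z : Fin n → ℝ, (∀ i, 0 ≤ z i) → x + z ∈ Δ) {ξ a b x : Fin n → ℝ}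
    (hξ : ∀ i, 0 ≤ ξ i) (hx : x ∈ NPface Δ ξ) (hseg : NPface Δ ξ ⊆ segment ℝ a b) (j : Fin n) :
    0 < ξ j := by
  have hmax : ∀ y ∈ segment ℝ a b, y j ≤ max (a j) (b j) := by
    rintro _ ⟨u, w, hu, hw, huw, rfl⟩
    simpa using Convex.combo_le_max (a j) (b j) hu hw huw
  refine (hξ j).lt_of_ne fun hξj => ?_
  set t := max (a j) (b j) - x j + 1
  have ht : 0 < t := by linarith [hmax x (hseg hx)]
  have hface : x + Pi.single j t ∈ NPface Δ ξ := by
    refine ⟨hup x hx.1 _ fun i => ?_, fun y hy => ?_⟩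
    · rcases eq_or_ne i j with rfl | hij
      · simpa using ht.le
      · simp [hij]
    · simpa [dotp_eq_dotProduct, dotProduct_add, ← hξj] using hx.2 y hy
  have := hmax _ (hseg hface)
  simp only [Pi.add_apply, Pi.single_eq_same] at this
  linarith

end NPface

section NewtonPolyhedron

def newtonPolyhedron (S : Finset (Fin n → ℝ)) : Set (Fin n → ℝ) :=
  {x | ∃ y ∈ convexHull ℝ (S : Set (Fin n → ℝ)), ∃ z : Fin n → ℝ, (∀ i, 0 ≤ z i) ∧ x = y + z}

variable {S : Finset (Fin n → ℝ)}

lemma convexHull_subset_newtonPolyhedron :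
    convexHull ℝ (S : Set (Fin n → ℝ)) ⊆ newtonPolyhedron S :=
  fun y hy => ⟨y, hy, 0, fun _ => le_rfl, (add_zero y).symm⟩

lemma add_mem_newtonPolyhedron {x : Fin n → ℝ} (hx : x ∈ newtonPolyhedron S) (z : Fin n → ℝ)
    (hz : ∀ i, 0 ≤ z i) : x + z ∈ newtonPolyhedron S := by
  obtain ⟨y, hy, z', hz', rfl⟩ := hx
  exact ⟨y, hy, z' + z, fun i => add_nonneg (hz' i) (hz i), add_assoc y z' z⟩

lemma nonneg_of_mem_newtonPolyhedron (hS : ∀ s ∈ S, ∀ i, 0 ≤ s i) {x : Fin n → ℝ}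
    (hx : x ∈ newtonPolyhedron S) (i : Fin n) : 0 ≤ x i := by
  obtain ⟨y, hy, z, hz, rfl⟩ := hx
  have hy0 : y ∈ Set.Ici 0 :=
    convexHull_min (fun s hs => Pi.le_def.2 (hS s hs)) (convex_Ici 0) hy
  exact add_nonneg (hy0 i) (hz i)

lemma exists_dotp_le_of_mem_newtonPolyhedron {ζ x : Fin n → ℝ} (hζ : ∀ i, 0 ≤ ζ i)
    (hx : x ∈ newtonPolyhedron S) : ∃ s ∈ S, dotp ζ s ≤ dotp ζ x := by
  obtain ⟨y, hy, z, hz, rfl⟩ := hx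
  have hconcave := (dotProductEquiv ℝ (Fin n) ζ).concaveOn (convex_univ (𝕜 := ℝ))
  obtain ⟨s, hs, hsy⟩ := hconcave.exists_le_of_mem_convexHull (Set.subset_univ _) hy
  refine ⟨s, hs, ?_⟩
  have hz' := dotp_nonneg hζ hz
  simp only [dotProductEquiv_apply_apply, dotp_eq_dotProduct] at hsy hz' ⊢
  rw [dotProduct_add]
  linarith

lemma mem_NPface_newtonPolyhedron {ζ a : Fin n → ℝ} (hζ : ∀ i, 0 ≤ ζ i)
    (ha : a ∈ newtonPolyhedron S) (hmin : ∀ s ∈ S, dotp ζ a ≤ dotp ζ s) :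
    a ∈ NPface (newtonPolyhedron S) ζ := by
  refine ⟨ha, fun x hx => ?_⟩
  obtain ⟨s, hs, hsx⟩ := exists_dotp_le_of_mem_newtonPolyhedron hζ hx
  exact (hmin s hs).trans hsx

lemma NPface_newtonPolyhedron_eq {ζ : Fin n → ℝ} (hζ : ∀ i, 0 < ζ i) :
    NPface (newtonPolyhedron S) ζ =
      convexHull ℝ (S : Set (Fin n → ℝ)) ∩ {x | ∀ y ∈ newtonPolyhedron S, dotp ζ x ≤ dotp ζ y} := by
  refine Set.Subset.antisymm ?_ fun x hx => ⟨convexHull_subset_newtonPolyhedron hx.1, hx.2⟩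
  rintro x ⟨hxΔ, hxmin⟩
  obtain ⟨y, hy, z, hz, rfl⟩ := id hxΔ
  have hyz := hxmin y (convexHull_subset_newtonPolyhedron hy)
  rw [dotp_eq_dotProduct, dotp_eq_dotProduct, dotProduct_add] at hyz
  obtain rfl : z = 0 := eq_zero_of_dotp_nonpos hζ hz (by rw [dotp_eq_dotProduct]; linarith)
  exact ⟨by simpa using hy, by simpa using hxmin⟩

lemma isCompact_NPface_newtonPolyhedron {ζ : Fin n → ℝ} (hζ : ∀ i, 0 < ζ i) :
    IsCompact (NPface (newtonPolyhedron S) ζ) := by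
  rw [NPface_newtonPolyhedron_eq hζ]
  refine (S.finite_toSet.isCompact_convexHull (𝕜 := ℝ)).inter_right ?_
  simp only [Set.ofPred_forall]
  exact isClosed_biInter fun y _ =>
    isClosed_le (continuous_const.dotProduct continuous_id) continuous_const

end NewtonPolyhedron

/-- Along the affine paths `t ↦ (1 - t) p s + t q s`, all starting nonnegative, stop at the first
time `t < 1` one of them reaches zero. -/
lemma exists_combo_nonneg_and_eq_zero {ι : Type*} (T : Finset ι) (p q : ι → ℝ)
    (hp : ∀ s ∈ T, 0 ≤ p s) (hq : ∃ s ∈ T, q s < 0) :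
    ∃ t : ℝ, 0 ≤ t ∧ t < 1 ∧ (∀ s ∈ T, 0 ≤ (1 - t) * p s + t * q s) ∧
      ∃ s ∈ T, q s < 0 ∧ (1 - t) * p s + t * q s = 0 := by
  classical
  set U := T.filter (fun s => q s < 0)
  have hU : U.Nonempty := let ⟨s, hs, hqs⟩ := hq; ⟨s, Finset.mem_filter.2 ⟨hs, hqs⟩⟩
  have hden : ∀ s ∈ U, 0 < p s - q s := fun s hs => by
    obtain ⟨hsT, hqs⟩ := Finset.mem_filter.1 hs
    linarith [hp s hsT]
  set r : ι → ℝ := fun s => p s / (p s - q s)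
  obtain ⟨s₀, hs₀, hr₀⟩ := U.exists_mem_eq_inf' hU r
  obtain ⟨hs₀T, hqs₀⟩ := Finset.mem_filter.1 hs₀
  have ht0 : 0 ≤ U.inf' hU r :=
    Finset.le_inf' hU r fun s hs => div_nonneg (hp s (Finset.mem_filter.1 hs).1) (hden s hs).le
  have ht1 : U.inf' hU r < 1 := by
    rw [hr₀, div_lt_one (hden s₀ hs₀)]
    linarith
  refine ⟨U.inf' hU r, ht0, ht1, fun s hs => ?_, s₀, hs₀T, hqs₀, ?_⟩
  · by_cases hqs : q s < 0
    · have hsU : s ∈ U := Finset.mem_filter.2 ⟨hs, hqs⟩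
      have := (le_div_iff₀ (hden s hsU)).1 (Finset.inf'_le r hsU)
      linarith
    · nlinarith [hp s hs]
  · rw [hr₀]
    simp only [r]
    field_simp [(hden s₀ hs₀).ne']
    ring

/-- Rescale `η` by `1 / η⬝a` off the support of `b` and by `1 / η⬝b` on it; since `a` and `b`
have disjoint supports, this normalises both values to `1`. -/
lemma exists_dotp_eq_one_of_min_eq_zero {η a b v : Fin n → ℝ} (hη : ∀ i, 0 ≤ η i)
    (hab : ∀ i, min (a i) (b i) = 0) (hv : ∀ i, 0 ≤ v i)
    (hva : dotp η v < dotp η a) (hvb : dotp η v < dotp η b) :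
    ∃ η' : Fin n → ℝ, (∀ i, 0 ≤ η' i) ∧ dotp η' a = 1 ∧ dotp η' b = 1 ∧ dotp η' v < 1 := by
  classical
  set A := dotp η a
  set B := dotp η b
  have hv0 := dotp_nonneg hη hv
  have hA : 0 < A := hv0.trans_lt hva
  have hB : 0 < B := hv0.trans_lt hvb
  set c : Fin n → ℝ := fun i => if b i = 0 then A⁻¹ else B⁻¹
  have hc0 : ∀ i, 0 ≤ c i := fun i => by
    simp only [c]; split_ifs <;> positivity
  have hcmin : ∀ i, c i ≤ (min A B)⁻¹ := fun i => by
    simp only [c]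
    split_ifs
    · exact inv_anti₀ (lt_min hA hB) (min_le_left A B)
    · exact inv_anti₀ (lt_min hA hB) (min_le_right A B)
  refine ⟨fun i => η i * c i, fun i => mul_nonneg (hη i) (hc0 i), ?_, ?_, ?_⟩
  · calc dotp (fun i => η i * c i) a = ∑ i, η i * a i * A⁻¹ := by
          refine Finset.sum_congr rfl fun i _ => ?_
          by_cases hbi : b i = 0
          · simp only [c, if_pos hbi]; ring
          · have hai : a i = 0 := by
              have hmin := hab i
              rcases min_choice (a i) (b i) with h | h <;> rw [h] at hmin
              · exact hmin
              · exact absurd hmin hbi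
            simp [hai]
      _ = 1 := by rw [← Finset.sum_mul]; exact mul_inv_cancel₀ hA.ne'
  · calc dotp (fun i => η i * c i) b = ∑ i, η i * b i * B⁻¹ := by
          refine Finset.sum_congr rfl fun i _ => ?_
          by_cases hbi : b i = 0
          · simp [hbi]
          · simp only [c, if_neg hbi]; ring
      _ = 1 := by rw [← Finset.sum_mul]; exact mul_inv_cancel₀ hB.ne'
  · calc dotp (fun i => η i * c i) v ≤ ∑ i, η i * v i * (min A B)⁻¹ :=
          Finset.sum_le_sum fun i _ => by
            rw [mul_right_comm]
            exact mul_le_mul_of_nonneg_left (hcmin i) (mul_nonneg (hη i) (hv i))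
      _ < 1 := by
          rw [← Finset.sum_mul, ← div_eq_mul_inv, div_lt_one (lt_min hA hB)]
          exact lt_min hva hvb

lemma two_le_npDim_of_dotp_ne {F : Set (Fin n → ℝ)} {η a b c : Fin n → ℝ} (ha : a ∈ F)
    (hb : b ∈ F) (hc : c ∈ F) (hab : a ≠ b) (hηab : dotp η a = dotp η b)
    (hηc : dotp η c ≠ dotp η a) : 2 ≤ npDim F := by
  have hli : LinearIndependent ℝ ![c - a, b - a] := by
    refine linearIndependent_fin2.2 ⟨sub_ne_zero.2 hab.symm, fun r hr => hηc ?_⟩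
    have := congrArg (dotp η) hr
    simp only [Matrix.cons_val_one, Matrix.cons_val_zero, dotp_eq_dotProduct, dotProduct_smul,
      dotProduct_sub, smul_eq_mul] at this hηab ⊢
    rw [hηab, sub_self, mul_zero] at this
    linarith
  have hspan : Submodule.span ℝ (Set.range ![c - a, b - a]) ≤ vectorSpan ℝ F := by
    rw [Submodule.span_le, Set.range_subset_iff]
    intro i
    fin_cases i
    · exact vsub_mem_vectorSpan ℝ hc ha
    · exact vsub_mem_vectorSpan ℝ hb ha
  simpa [npDim, finrank_span_eq_card hli] using Submodule.finrank_mono hspan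

/-- Tilting `ξ` towards `η` along `(1 - t) ξ + t η`, the minimum over `newtonPolyhedron S`
stays at `a` until it is also attained at a point of `S` with `η < 1`; this happens before
`t = 1` since `η⬝v < 1 = η⬝a`. -/
lemma exists_tilted_NPface {S : Finset (Fin n → ℝ)} {ξ η a v : Fin n → ℝ} (hξ : ∀ i, 0 < ξ i)
    (hη : ∀ i, 0 ≤ η i) (ha : a ∈ NPface (newtonPolyhedron S) ξ) (hηa : dotp η a = 1)
    (hv : v ∈ newtonPolyhedron S) (hηv : dotp η v < 1) :
    ∃ ζ : Fin n → ℝ, (∀ i, 0 < ζ i) ∧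
      (∀ x ∈ NPface (newtonPolyhedron S) ξ, dotp η x = 1 → x ∈ NPface (newtonPolyhedron S) ζ) ∧
      ∃ s ∈ NPface (newtonPolyhedron S) ζ, dotp η s < 1 := by
  have hSΔ : ∀ s ∈ S, s ∈ newtonPolyhedron S := fun s hs =>
    convexHull_subset_newtonPolyhedron (subset_convexHull ℝ _ hs)
  obtain ⟨s₀, hs₀, hs₀v⟩ := exists_dotp_le_of_mem_newtonPolyhedron hη hv
  obtain ⟨t, ht0, ht1, hnonneg, s, hs, hηs, hzero⟩ :=
    exists_combo_nonneg_and_eq_zero S (fun s => dotp ξ s - dotp ξ a) (fun s => dotp η s - 1)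
      (fun s hs => sub_nonneg.2 (ha.2 s (hSΔ s hs))) ⟨s₀, hs₀, by linarith⟩
  set ζ := (1 - t) • ξ + t • η
  have hζ : ∀ x, dotp ζ x - dotp ζ a = (1 - t) * (dotp ξ x - dotp ξ a) + t * (dotp η x - 1) := by
    intro x
    simp only [ζ, dotp_eq_dotProduct, add_dotProduct, smul_dotProduct, smul_eq_mul] at hηa ⊢
    rw [hηa]
    ring
  have hζpos : ∀ i, 0 < ζ i := fun i => by
    simp only [ζ, Pi.add_apply, Pi.smul_apply, smul_eq_mul]
    exact add_pos_of_pos_of_nonneg (mul_pos (by linarith) (hξ i)) (mul_nonneg ht0 (hη i))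
  have haζ : a ∈ NPface (newtonPolyhedron S) ζ :=
    mem_NPface_newtonPolyhedron (fun i => (hζpos i).le) ha.1 fun s hs => by
      linarith [hζ s, hnonneg s hs]
  refine ⟨ζ, hζpos, fun x hx hηx => mem_NPface_of_dotp_eq haζ hx.1 ?_,
    s, mem_NPface_of_dotp_eq haζ (hSΔ s hs) ?_, by linarith⟩
  · have hξx : dotp ξ x = dotp ξ a := le_antisymm (hx.2 a ha.1) (ha.2 x hx.1)
    simpa [hξx, hηx, sub_eq_zero] using hζ x
  · linarith [hζ s]

end

/-- if a loose edge has endpoints `a`, `b` with `min (a i) (b i) = 0`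
for every `i`, then `a` and `b` are the only vertices of `Δ`. -/
theorem loose_edge_only_vertices {n : ℕ} (Δ E : Set (Fin n → ℝ))
    (hΔ : IsNewtonPolyhedron Δ) (hE : IsLooseEdge Δ E)
    (a b : Fin n → ℝ) (hab : a ≠ b) (hseg : E = segment ℝ a b)
    (hmin : ∀ i, min (a i) (b i) = 0) :
    ∀ v, IsVertexOf Δ v → v = a ∨ v = b := by
  rintro v ⟨η, hη, hvη⟩
  by_contra! hv
  obtain ⟨S, -, hSℕ, hΔS⟩ := hΔ
  replace hΔS : Δ = newtonPolyhedron S := hΔS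
  subst hΔS hseg
  obtain ⟨⟨ξ, hξ, hface⟩, -, -, hloose⟩ := hE
  have ha : a ∈ NPface (newtonPolyhedron S) ξ := hface ▸ left_mem_segment ℝ a b
  have hb : b ∈ NPface (newtonPolyhedron S) ξ := hface ▸ right_mem_segment ℝ a b
  have hξpos := pos_of_NPface_subset_segment (fun _ => add_mem_newtonPolyhedron) hξ ha hface.ge
  have hvΔ : v ∈ newtonPolyhedron S := (hvη.ge rfl).1
  have hS : ∀ s ∈ S, ∀ i, 0 ≤ s i := fun s hs i => by
    obtain ⟨m, hm⟩ := hSℕ s hs i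
    exact hm ▸ m.cast_nonneg
  obtain ⟨η', hη', hη'a, hη'b, hη'v⟩ := exists_dotp_eq_one_of_min_eq_zero hη hmin
    (nonneg_of_mem_newtonPolyhedron hS hvΔ)
    (dotp_lt_of_NPface_eq_singleton hvη ha.1 hv.1.symm)
    (dotp_lt_of_NPface_eq_singleton hvη hb.1 hv.2.symm)
  obtain ⟨ζ, hζ, hface_ζ, s, hs, hη's⟩ := exists_tilted_NPface hξpos hη' ha hη'a hvΔ hη'v
  have haζ := hface_ζ a ha hη'a
  have hbζ := hface_ζ b hb hη'b
  exact hloose _ ⟨ζ, fun i => (hζ i).le, rfl⟩ (isCompact_NPface_newtonPolyhedron hζ)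
    (two_le_npDim_of_dotp_ne haζ hbζ hs hab (hη'a.trans hη'b.symm) (by linarith))
    (segment_subset_NPface (hface ▸ fun x hx => hx.1) haζ hbζ)
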